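/- Assume κ is a regular uncountable cardinal with κ^{<κ} = κ. Let p ∈ P(F*_κ), and suppose that for every node t ∈ p that is F*_κ-splitting in p we are given a set B_t ∈ F*_κ with B_t ⊆ {α < κ : t⌢⟨α⟩ ∈ p}. Define q = {s ∈ p : for every i < dom(s), if s↾i is F*_κ-splitting in p then s(i) ∈ B_{s↾i}}. Then q is a condition in P(F*_κ), q ≥ p (that is, q ⊆ p), and deg_q(s) = deg_p(s) for every s ∈ q. -/

import Mathlib

open Cardinal Set

universe u

/-- A node of the tree `^{<κ}κ`: a function from an ordinal `dom < κ` (identified with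
`κ.ord`) to ordinals `< κ.ord`, normalized to take value `0` outside its domain. -/
structure KNode (κ : Cardinal.{u}) : Type (u + 1) where
  dom : Ordinal.{u}
  dom_lt : dom < κ.ord
  val : Ordinal.{u} → Ordinal.{u}
  val_lt : ∀ i, i < dom → val i < κ.ord
  val_zero : ∀ i, ¬ i < dom → val i = 0

namespace KNode

variable {κ : Cardinal.{u}}

/-- The restriction `s↾β` of a node `s` to a domain `β ≤ dom s`. -/
noncomputable def restrict (s : KNode κ) (β : Ordinal.{u}) (h : β ≤ s.dom) : KNode κ where
  dom := β
  dom_lt := lt_of_le_of_lt h s.dom_lt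
  val := fun i => if i < β then s.val i else 0
  val_lt := fun i hi => by
    simp only [if_pos hi]; exact s.val_lt i (lt_of_lt_of_le hi h)
  val_zero := fun i hi => if_neg hi

end KNode

/-- `p` is a subtree of `^{<κ}κ`: a nonempty set of nodes closed under restriction. -/
def IsSubtree {κ : Cardinal.{u}} (p : Set (KNode κ)) : Prop :=
  p.Nonempty ∧ ∀ s ∈ p, ∀ (β : Ordinal.{u}) (h : β ≤ s.dom), s.restrict β h ∈ p

/-- The set `{α < κ : s⌢⟨α⟩ ∈ p}` of immediate successor values of `s` in `p`. -/
def succSet {κ : Cardinal.{u}} (p : Set (KNode κ)) (s : KNode κ) : Set Ordinal.{u} :=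
  {a | ∃ t ∈ p, t.dom = s.dom + 1 ∧ (∀ i, i < s.dom → t.val i = s.val i) ∧ t.val s.dom = a}

/-- `s` is `F`-splitting in `p` if `{α < κ : s⌢⟨α⟩ ∈ p} ∈ F`. -/
def IsSplitting {κ : Cardinal.{u}} (F : Set (Set Ordinal.{u})) (p : Set (KNode κ))
    (s : KNode κ) : Prop :=
  succSet p s ∈ F

/-- The splitting history `deg_p(s) = {i < dom s : ∃ t ∈ p, t↾i = s↾i ∧ t i ≠ s i}`. -/
def deg {κ : Cardinal.{u}} (p : Set (KNode κ)) (s : KNode κ) : Set Ordinal.{u} :=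
  {i | i < s.dom ∧ ∃ t ∈ p, i < t.dom ∧ (∀ j, j < i → t.val j = s.val j) ∧ t.val i ≠ s.val i}

/-- `A` is a closed subset of the ordinal `δ` (in the order topology): every limit point
below `δ` of elements of `A` belongs to `A`. -/
def OrdClosedBelow (A : Set Ordinal.{u}) (δ : Ordinal.{u}) : Prop :=
  ∀ β, β < δ → Order.IsSuccLimit β → (∀ γ, γ < β → ∃ i ∈ A, γ < i ∧ i < β) → β ∈ A

/-- `p` is an `F`-perfect subtree of `^{<κ}κ`. -/
def IsFPerfect (κ : Cardinal.{u}) (F : Set (Set Ordinal.{u})) (p : Set (KNode κ)) : Prop :=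
  IsSubtree p ∧
  (∀ β, β < κ.ord → ∃ s ∈ p, β ≤ s.dom) ∧
  (∀ s ∈ p, ∃ t ∈ p, s.dom ≤ t.dom ∧ (∀ i, i < s.dom → t.val i = s.val i) ∧
    IsSplitting F p t) ∧
  (∀ s : KNode κ, Order.IsSuccLimit s.dom → (∀ β (h : β < s.dom), s.restrict β h.le ∈ p) → s ∈ p)

/-- The forcing notion `P(F)`: `F`-perfect trees satisfying (o) every successor set is a
singleton or a member of `F`, and (i) every splitting history is closed. A condition `q`
is stronger than `p` (`q ≥ p`) iff `q ⊆ p`. -/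
def PF (κ : Cardinal.{u}) (F : Set (Set Ordinal.{u})) : Set (Set (KNode κ)) :=
  {p | IsFPerfect κ F p ∧
    (∀ s ∈ p, (∃ a, succSet p s = {a}) ∨ succSet p s ∈ F) ∧
    (∀ s ∈ p, OrdClosedBelow (deg p s) s.dom)}

/-- Incompatibility of conditions in `P(F)`: no common extension. -/
def Incompat (κ : Cardinal.{u}) (F : Set (Set Ordinal.{u})) (p q : Set (KNode κ)) : Prop :=
  ¬ ∃ r ∈ PF κ F, r ⊆ p ∧ r ⊆ q

/-- The co-bounded filter `F*_κ` on `κ`: sets `A ⊆ κ` with `|κ \ A| < κ`. -/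
def cobounded (κ : Cardinal.{u}) : Set (Set Ordinal.{u}) :=
  {A | A ⊆ Set.Iio κ.ord ∧ #(↥(Set.Iio κ.ord \ A)) < Cardinal.lift.{u + 1} κ}

/-- `F` is a `(<κ)`-complete filter on `κ`. -/
def IsKappaCompleteFilterOn (κ : Cardinal.{u}) (F : Set (Set Ordinal.{u})) : Prop :=
  (∀ A ∈ F, A ⊆ Set.Iio κ.ord) ∧
  Set.Iio κ.ord ∈ F ∧
  (∀ A ∈ F, ∀ B, A ⊆ B → B ⊆ Set.Iio κ.ord → B ∈ F) ∧
  (∀ (ι : Type u) (f : ι → Set Ordinal.{u}), Nonempty ι → #ι < κ →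
    (∀ i, f i ∈ F) → (⋂ i, f i) ∈ F)

/-- `g : κ → κ` is a κ-branch of `q`: every restriction `g↾α`, `α < κ`, is a node of `q`. -/
def IsBranch {κ : Cardinal.{u}} (q : Set (KNode κ)) (g : Ordinal.{u} → Ordinal.{u}) : Prop :=
  ∀ α, α < κ.ord → ∃ s ∈ q, s.dom = α ∧ ∀ i, i < α → s.val i = g i

/-- `C` is a club (closed unbounded set) in `δ`. -/
def IsClubBelow (C : Set Ordinal.{u}) (δ : Ordinal.{u}) : Prop :=
  C ⊆ Set.Iio δ ∧ (∀ β, β < δ → ∃ i ∈ C, β < i) ∧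
  ∀ β, β < δ → Order.IsSuccLimit β → (∀ γ, γ < β → ∃ i ∈ C, γ < i ∧ i < β) → β ∈ C

/-- The dense set `D_f = {p ∈ P(F*_κ) : ∀ s ∈ p, ∀ i ∈ deg_p(s), s(i) > f(i)}`. -/
def Dset (κ : Cardinal.{u}) (f : Ordinal.{u} → Ordinal.{u}) : Set (Set (KNode κ)) :=
  {p | p ∈ PF κ (cobounded κ) ∧ ∀ s ∈ p, ∀ i ∈ deg p s, f i < s.val i}


/-! Only the levels where `p` splits are thinned, and there the sets `B_t` still belong to the
filter. As no set in the filter is a singleton, a node of `q` splits in `q` exactly when it splits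
in `p`; this gives condition (o), lets every node of `q` be extended to a splitting node of `q`
(cut the splitting extension in `p` at its first splitting level), and shows that every `i` in
`deg_p(s)` is witnessed inside `q` by an element of `B_{s↾i}` other than `s(i)`. Membership in
`q` is a condition on each level separately, so `q` is closed at limits as `p` is, and a closed
subtree in which every node has an immediate successor has nodes of every height below `κ`. -/

namespace KNode

variable {κ : Cardinal.{u}}

theorem ext {s t : KNode κ} (hd : s.dom = t.dom) (hv : ∀ i < s.dom, s.val i = t.val i) :
    s = t := by
  obtain ⟨d, _, v, _, hv0⟩ := s
  obtain ⟨d', _, v', _, hv0'⟩ := t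
  obtain rfl : d = d' := hd
  simp only [KNode.mk.injEq, true_and]
  funext i
  by_cases hi : i < d
  · exact hv i hi
  · rw [hv0 i hi, hv0' i hi]

@[simp] theorem restrict_dom (s : KNode κ) (β : Ordinal.{u}) (h : β ≤ s.dom) :
    (s.restrict β h).dom = β := rfl

theorem restrict_val_of_lt (s : KNode κ) {β i : Ordinal.{u}} (h : β ≤ s.dom)
    (hi : i < (s.restrict β h).dom) :
    (s.restrict β h).val i = s.val i := if_pos hi

theorem restrict_restrict (s : KNode κ) {β γ : Ordinal.{u}} (h : β ≤ s.dom)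
    (h' : γ ≤ (s.restrict β h).dom) :
    (s.restrict β h).restrict γ h' = s.restrict γ (h'.trans h) :=
  ext rfl fun i (hi : i < γ) => by
    rw [restrict_val_of_lt _ _ hi, restrict_val_of_lt _ _ hi,
      restrict_val_of_lt _ _ (lt_of_lt_of_le hi h')]

theorem restrict_eq_restrict (s t : KNode κ) (i : Ordinal.{u}) (hs : i ≤ s.dom)
    (ht : i ≤ t.dom) (h : ∀ j < i, s.val j = t.val j) : s.restrict i hs = t.restrict i ht :=
  ext rfl fun j (hj : j < i) => by
    rw [restrict_val_of_lt _ _ hj, restrict_val_of_lt _ _ hj, h j hj]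

theorem restrict_eq_of_agree {s t : KNode κ} (h : s.dom ≤ t.dom)
    (hagr : ∀ i < s.dom, t.val i = s.val i) : t.restrict s.dom h = s :=
  ext rfl fun i (hi : i < s.dom) => by rw [restrict_val_of_lt _ _ hi, hagr i hi]

theorem restrict_self (s : KNode κ) : s.restrict s.dom le_rfl = s :=
  restrict_eq_of_agree le_rfl fun _ _ => rfl

noncomputable def ofFun (v : Ordinal.{u} → Ordinal.{u}) (i : Ordinal.{u}) (hi : i < κ.ord) :
    KNode κ where
  dom := i
  dom_lt := hi
  val j := if j < i ∧ v j < κ.ord then v j else 0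
  val_lt j hj := by
    split_ifs with h
    exacts [h.2, lt_of_le_of_lt zero_le (hj.trans hi)]
  val_zero _ hj := if_neg fun h => hj h.1

theorem ofFun_val (v : Ordinal.{u} → Ordinal.{u}) {i : Ordinal.{u}} (hi : i < κ.ord)
    (j : Ordinal.{u}) : (ofFun v i hi).val j = if j < i ∧ v j < κ.ord then v j else 0 := rfl

theorem ofFun_congr {v w : Ordinal.{u} → Ordinal.{u}} {i : Ordinal.{u}} (hi : i < κ.ord)
    (h : ∀ j < i, v j = w j) : ofFun v i hi = ofFun w i hi :=
  ext rfl fun j hj => by simp only [ofFun_val, h j hj]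

theorem restrict_ofFun (v : Ordinal.{u} → Ordinal.{u}) {i β : Ordinal.{u}} (hi : i < κ.ord)
    (h : β ≤ (ofFun v i hi).dom) :
    (ofFun v i hi).restrict β h = ofFun v β (lt_of_le_of_lt h hi) :=
  ext rfl fun j (hj : j < β) => by
    have hji : j < i := lt_of_lt_of_le hj h
    simp only [restrict_val_of_lt _ h hj, ofFun_val, hj, hji, true_and]

theorem ofFun_add_one_eq {v : Ordinal.{u} → Ordinal.{u}} {i : Ordinal.{u}}
    (hi : i + 1 < κ.ord) {t : KNode κ} (htd : t.dom = i + 1)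
    (hagr : ∀ j < i, t.val j = (ofFun v i ((lt_add_one i).trans hi)).val j)
    (hvi : t.val i = v i) : ofFun v (i + 1) hi = t := by
  refine ext htd.symm fun j (hj : j < i + 1) => ?_
  rcases (Order.lt_add_one_iff.mp hj).lt_or_eq with hji | rfl
  · simp only [hagr j hji, ofFun_val, hj, hji, true_and]
  · have hvlt : v j < κ.ord := hvi ▸ t.val_lt j (htd ▸ hj)
    simp only [ofFun_val, hj, hvlt, and_self, if_true, hvi]

end KNode

open KNode

section Thinning

variable {κ : Cardinal.{u}}

theorem succSet_subset_Iio (p : Set (KNode κ)) (s : KNode κ) : succSet p s ⊆ Iio κ.ord := by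
  rintro _ ⟨t, -, htd, -, rfl⟩
  exact t.val_lt s.dom (htd ▸ lt_add_one s.dom)

theorem succSet_mono {p q : Set (KNode κ)} (h : q ⊆ p) (s : KNode κ) :
    succSet q s ⊆ succSet p s := fun _ ⟨t, htq, hrest⟩ => ⟨t, h htq, hrest⟩

theorem deg_mono {p q : Set (KNode κ)} (h : q ⊆ p) (s : KNode κ) : deg q s ⊆ deg p s :=
  fun _ ⟨hi, t, htq, hrest⟩ => ⟨hi, t, h htq, hrest⟩

theorem IsSubtree.val_mem_succSet {p : Set (KNode κ)} (hp : IsSubtree p) {s : KNode κ}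
    (hs : s ∈ p) {i : Ordinal.{u}} (hi : i < s.dom) :
    s.val i ∈ succSet p (s.restrict i hi.le) :=
  ⟨s.restrict (i + 1) (Order.add_one_le_iff.mpr hi), hp.2 s hs _ _, rfl,
    fun j (hj : j < i) => by
      rw [restrict_val_of_lt _ _ hj, restrict_val_of_lt _ _ (hj.trans (lt_add_one i))],
    restrict_val_of_lt _ _ (lt_add_one i)⟩

theorem cobounded_mono {A C : Set Ordinal.{u}} (hA : A ∈ cobounded κ) (hAC : A ⊆ C)
    (hC : C ⊆ Iio κ.ord) : C ∈ cobounded κ :=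
  ⟨hC, lt_of_le_of_lt (mk_le_mk_of_subset (sdiff_subset_sdiff_right hAC)) hA.2⟩

theorem cobounded_exists_ne (hκ : ℵ₀ ≤ κ) {A : Set Ordinal.{u}} (hA : A ∈ cobounded κ)
    (a : Ordinal.{u}) : ∃ b ∈ A, b ≠ a := by
  by_contra! hAa
  have hκ' : ℵ₀ ≤ lift.{u + 1} κ := aleph0_le_lift.mpr hκ
  have hcover : Iio κ.ord ⊆ (Iio κ.ord \ A) ∪ {a} := fun x hx =>
    (em (x ∈ A)).elim (fun hxA => Or.inr (hAa x hxA)) (fun hxA => Or.inl ⟨hx, hxA⟩)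
  have := calc lift.{u + 1} κ
      = #(Iio κ.ord) := by rw [Cardinal.mk_Iio_ordinal, card_ord]
    _ ≤ #(↥((Iio κ.ord \ A) ∪ {a})) := mk_le_mk_of_subset hcover
    _ ≤ #↥(Iio κ.ord \ A) + 1 := (mk_union_le _ _).trans_eq (by rw [mk_singleton])
    _ < lift.{u + 1} κ := add_lt_of_lt hκ' hA.2 (one_lt_aleph0.trans_le hκ')
  exact this.false

noncomputable def branchVal (q : Set (KNode κ)) : Ordinal.{u} → Ordinal.{u} :=
  wellFounded_lt.fix fun i rec =>
    if hi : i < κ.ord then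
      Classical.epsilon (· ∈ succSet q (ofFun (fun j => if hj : j < i then rec j hj else 0) i hi))
    else 0

theorem branchVal_eq (q : Set (KNode κ)) {i : Ordinal.{u}} (hi : i < κ.ord) :
    branchVal q i = Classical.epsilon (· ∈ succSet q (ofFun (branchVal q) i hi)) := by
  conv_lhs => rw [branchVal, WellFounded.fix_eq, dif_pos hi]
  exact congrArg (fun u => Classical.epsilon (· ∈ succSet q u))
    (ofFun_congr hi fun j hj => dif_pos hj)

theorem IsSubtree.ofFun_branchVal_mem {q : Set (KNode κ)} (hq : IsSubtree q)
    (hsucc : ∀ s ∈ q, (succSet q s).Nonempty)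
    (hlim : ∀ s : KNode κ, Order.IsSuccLimit s.dom →
      (∀ β (h : β < s.dom), s.restrict β h.le ∈ q) → s ∈ q)
    (i : Ordinal.{u}) (hi : i < κ.ord) : ofFun (branchVal q) i hi ∈ q := by
  induction i using Ordinal.limitRecOn with
  | zero =>
    obtain ⟨s, hs⟩ := hq.1
    convert hq.2 s hs 0 zero_le
    exact ext rfl fun j hj => absurd hj not_lt_zero
  | add_one i ih =>
    have hi' : i < κ.ord := (lt_add_one i).trans hi
    obtain ⟨t, htq, htd, hagr, htv⟩ := Classical.epsilon_spec (hsucc _ (ih hi'))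
    rw [← branchVal_eq q hi'] at htv
    rwa [ofFun_add_one_eq hi htd hagr htv]
  | limit i hl ih =>
    exact hlim _ hl fun β hβ => by
      rw [restrict_ofFun]
      exact ih β hβ _

theorem IsSubtree.exists_dom_eq {q : Set (KNode κ)} (hq : IsSubtree q)
    (hsucc : ∀ s ∈ q, (succSet q s).Nonempty)
    (hlim : ∀ s : KNode κ, Order.IsSuccLimit s.dom →
      (∀ β (h : β < s.dom), s.restrict β h.le ∈ q) → s ∈ q)
    {β : Ordinal.{u}} (hβ : β < κ.ord) : ∃ s ∈ q, s.dom = β :=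
  ⟨_, hq.ofFun_branchVal_mem hsucc hlim β hβ, rfl⟩

section Thin

variable {F : Set (Set Ordinal.{u})} {p : Set (KNode κ)} {B : KNode κ → Set Ordinal.{u}}
  {s t : KNode κ}

def thin (F : Set (Set Ordinal.{u})) (p : Set (KNode κ)) (B : KNode κ → Set Ordinal.{u}) :
    Set (KNode κ) :=
  {s | s ∈ p ∧ ∀ i (h : i < s.dom),
    IsSplitting F p (s.restrict i h.le) → s.val i ∈ B (s.restrict i h.le)}

theorem thin_subset : thin F p B ⊆ p := fun _ hs => hs.1

theorem restrict_mem_thin (hp : IsSubtree p) (hs : s ∈ thin F p B) (β : Ordinal.{u})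
    (h : β ≤ s.dom) : s.restrict β h ∈ thin F p B := by
  refine ⟨hp.2 s hs.1 β h, fun i (hi : i < β) hisp => ?_⟩
  rw [restrict_restrict] at hisp ⊢
  rw [restrict_val_of_lt _ _ hi]
  exact hs.2 i (lt_of_lt_of_le hi h) hisp

theorem thin_isSubtree (hp : IsSubtree p) : IsSubtree (thin F p B) := by
  obtain ⟨s, hs⟩ := hp.1
  refine ⟨⟨s.restrict 0 zero_le, hp.2 s hs _ _, fun i hi => ?_⟩,
    fun _ hs => restrict_mem_thin hp hs⟩
  exact absurd hi not_lt_zero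

theorem mem_thin_of_succ (hs : s ∈ thin F p B) (ht : t ∈ p) (htd : t.dom = s.dom + 1)
    (hagr : ∀ i < s.dom, t.val i = s.val i) (htB : IsSplitting F p s → t.val s.dom ∈ B s) :
    t ∈ thin F p B := by
  refine ⟨ht, fun i hi hisp => ?_⟩
  rcases (Order.lt_add_one_iff.mp (htd ▸ hi)).lt_or_eq with hlt | rfl
  · rw [restrict_eq_restrict t s i hi.le hlt.le fun j hj => hagr j (hj.trans hlt)] at hisp ⊢
    rw [hagr i hlt]
    exact hs.2 i hlt hisp
  · rw [restrict_eq_of_agree hi.le hagr] at hisp ⊢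
    exact htB hisp

theorem succSet_thin_of_not_isSplitting (hs : s ∈ thin F p B) (hsp : ¬ IsSplitting F p s) :
    succSet (thin F p B) s = succSet p s :=
  (succSet_mono thin_subset s).antisymm fun _ ⟨t, htp, htd, hagr, hta⟩ =>
    ⟨t, mem_thin_of_succ hs htp htd hagr (absurd · hsp), htd, hagr, hta⟩

theorem subset_succSet_thin (hs : s ∈ thin F p B) (hBs : B s ⊆ succSet p s) :
    B s ⊆ succSet (thin F p B) s := by
  intro a ha
  obtain ⟨t, htp, htd, hagr, rfl⟩ := hBs ha
  exact ⟨t, mem_thin_of_succ hs htp htd hagr fun _ => ha, htd, hagr, rfl⟩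

theorem isSplitting_thin (hF_mono : ∀ A ∈ F, ∀ C, A ⊆ C → C ⊆ Iio κ.ord → C ∈ F)
    (hB : ∀ t ∈ p, IsSplitting F p t → B t ∈ F ∧ B t ⊆ succSet p t)
    (hs : s ∈ thin F p B) (hsp : IsSplitting F p s) : IsSplitting F (thin F p B) s :=
  hF_mono _ (hB s hs.1 hsp).1 _ (subset_succSet_thin hs (hB s hs.1 hsp).2)
    (succSet_subset_Iio _ s)

theorem thin_succSet_singleton_or_mem
    (hF_mono : ∀ A ∈ F, ∀ C, A ⊆ C → C ⊆ Iio κ.ord → C ∈ F)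
    (hF_ne : ∀ A ∈ F, ∀ a, ∃ b ∈ A, b ≠ a)
    (hB : ∀ t ∈ p, IsSplitting F p t → B t ∈ F ∧ B t ⊆ succSet p t)
    (hpo : ∀ s ∈ p, (∃ a, succSet p s = {a}) ∨ succSet p s ∈ F) (hs : s ∈ thin F p B) :
    (∃ a, succSet (thin F p B) s = {a}) ∨ succSet (thin F p B) s ∈ F := by
  rcases hpo s hs.1 with ⟨a, ha⟩ | hsp
  · have hnsp : ¬ IsSplitting F p s := fun hsp => by
      obtain ⟨b, hb, hba⟩ := hF_ne _ hsp a
      rw [ha] at hb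
      exact hba hb
    exact Or.inl ⟨a, (succSet_thin_of_not_isSplitting hs hnsp).trans ha⟩
  · exact Or.inr (isSplitting_thin hF_mono hB hs hsp)

theorem mem_thin_of_isSuccLimit
    (hpc : ∀ s : KNode κ, Order.IsSuccLimit s.dom →
      (∀ β (h : β < s.dom), s.restrict β h.le ∈ p) → s ∈ p)
    (s : KNode κ) (hs : Order.IsSuccLimit s.dom)
    (hres : ∀ β (h : β < s.dom), s.restrict β h.le ∈ thin F p B) : s ∈ thin F p B := by
  refine ⟨hpc s hs fun β h => (hres β h).1, fun i hi hisp => ?_⟩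
  have hi1 := (hres (i + 1) (hs.add_one_lt hi)).2 i (lt_add_one i)
  rw [restrict_restrict, restrict_val_of_lt _ _ (lt_add_one i)] at hi1
  exact hi1 hisp

theorem exists_isSplitting_thin_extension
    (hF_mono : ∀ A ∈ F, ∀ C, A ⊆ C → C ⊆ Iio κ.ord → C ∈ F)
    (hB : ∀ t ∈ p, IsSplitting F p t → B t ∈ F ∧ B t ⊆ succSet p t) (hp : IsSubtree p)
    (hext : ∀ s ∈ p, ∃ t ∈ p, s.dom ≤ t.dom ∧ (∀ i, i < s.dom → t.val i = s.val i) ∧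
      IsSplitting F p t)
    (hs : s ∈ thin F p B) :
    ∃ t ∈ thin F p B, s.dom ≤ t.dom ∧ (∀ i, i < s.dom → t.val i = s.val i) ∧
      IsSplitting F (thin F p B) t := by
  obtain ⟨t, htp, hst, hagr, htsp⟩ := hext s hs.1
  set S : Set Ordinal.{u} :=
    {j | s.dom ≤ j ∧ ∃ h : j ≤ t.dom, IsSplitting F p (t.restrict j h)}
  have hSne : S.Nonempty := ⟨t.dom, hst, le_rfl, by rwa [restrict_self]⟩
  obtain ⟨hsj, hjt, hjsp⟩ : sInf S ∈ S := csInf_mem hSne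
  have htj : t.restrict (sInf S) hjt ∈ thin F p B := by
    refine ⟨hp.2 t htp _ hjt, fun k (hk : k < sInf S) hksp => ?_⟩
    rw [restrict_restrict] at hksp ⊢
    have hks : k < s.dom := lt_of_not_ge fun hsk => notMem_of_lt_csInf' hk ⟨hsk, _, hksp⟩
    rw [restrict_eq_restrict t s k _ hks.le fun l hl => hagr l (hl.trans hks)] at hksp ⊢
    rw [restrict_val_of_lt _ _ hk, hagr k hks]
    exact hs.2 k hks hksp
  refine ⟨_, htj, hsj, fun i hi => ?_, isSplitting_thin hF_mono hB htj hjsp⟩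
  rw [restrict_val_of_lt _ _ (lt_of_lt_of_le hi hsj), hagr i hi]

theorem IsSubtree.isSplitting_restrict_of_mem_deg (hp : IsSubtree p)
    (hpo : ∀ s ∈ p, (∃ a, succSet p s = {a}) ∨ succSet p s ∈ F) (hs : s ∈ p)
    {i : Ordinal.{u}} (hi : i ∈ deg p s) : IsSplitting F p (s.restrict i hi.1.le) := by
  obtain ⟨his, t, htp, hit, hagr, hne⟩ := hi
  refine (hpo _ (hp.2 s hs i his.le)).resolve_left fun ⟨a, ha⟩ => hne ?_
  have hsa := hp.val_mem_succSet hs his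
  have hta := hp.val_mem_succSet htp hit
  rw [restrict_eq_restrict t s i hit.le his.le hagr, ha] at hta
  rw [ha] at hsa
  exact hta.trans hsa.symm

theorem deg_thin (hF_ne : ∀ A ∈ F, ∀ a, ∃ b ∈ A, b ≠ a)
    (hB : ∀ t ∈ p, IsSplitting F p t → B t ∈ F ∧ B t ⊆ succSet p t) (hp : IsSubtree p)
    (hpo : ∀ s ∈ p, (∃ a, succSet p s = {a}) ∨ succSet p s ∈ F) (hs : s ∈ thin F p B) :
    deg (thin F p B) s = deg p s := by
  refine (deg_mono thin_subset s).antisymm fun i hi => ?_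
  have hsp := hp.isSplitting_restrict_of_mem_deg hpo hs.1 hi
  obtain ⟨hBF, hBs⟩ := hB _ (hp.2 s hs.1 i hi.1.le) hsp
  obtain ⟨b, hb, hbs⟩ := hF_ne _ hBF (s.val i)
  obtain ⟨u, hu, hud, hagr, rfl⟩ :=
    subset_succSet_thin (restrict_mem_thin hp hs i hi.1.le) hBs hb
  exact ⟨hi.1, u, hu, hud ▸ lt_add_one i,
    fun j (hj : j < i) => by rw [hagr j hj, restrict_val_of_lt _ _ hj], hbs⟩

theorem thin_mem_PF (hF_mono : ∀ A ∈ F, ∀ C, A ⊆ C → C ⊆ Iio κ.ord → C ∈ F)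
    (hF_ne : ∀ A ∈ F, ∀ a, ∃ b ∈ A, b ≠ a) (hp : p ∈ PF κ F)
    (hB : ∀ t ∈ p, IsSplitting F p t → B t ∈ F ∧ B t ⊆ succSet p t) :
    thin F p B ∈ PF κ F := by
  obtain ⟨⟨hsub, -, hext, hpc⟩, hpo, hpi⟩ := hp
  have hoq := fun s (hs : s ∈ thin F p B) =>
    thin_succSet_singleton_or_mem hF_mono hF_ne hB hpo hs
  have hsucc : ∀ s ∈ thin F p B, (succSet (thin F p B) s).Nonempty := fun s hs =>
    (hoq s hs).elim (fun ⟨a, ha⟩ => ⟨a, ha ▸ rfl⟩)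
      fun h => (hF_ne _ h 0).imp fun _ hb => hb.1
  have hlim := mem_thin_of_isSuccLimit (F := F) (B := B) hpc
  refine ⟨⟨thin_isSubtree hsub, fun β hβ => ?_,
    fun s hs => exists_isSplitting_thin_extension hF_mono hB hsub hext hs, hlim⟩,
    hoq, fun s hs => ?_⟩
  · obtain ⟨s, hs, rfl⟩ := (thin_isSubtree hsub).exists_dom_eq hsucc hlim hβ
    exact ⟨s, hs, le_rfl⟩
  · rw [deg_thin hF_ne hB hsub hpo hs]
    exact hpi s hs.1

end Thin

end Thinning

theorem stmt_10_general (κ : Cardinal.{u}) (huncount : ℵ₀ < κ)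
    (p : Set (KNode κ)) (hp : p ∈ PF κ (cobounded κ))
    (B : KNode κ → Set Ordinal.{u})
    (hB : ∀ t ∈ p, IsSplitting (cobounded κ) p t →
      B t ∈ cobounded κ ∧ B t ⊆ succSet p t)
    (q : Set (KNode κ))
    (hq : q = {s | s ∈ p ∧ ∀ i (h : i < s.dom),
      IsSplitting (cobounded κ) p (s.restrict i h.le) → s.val i ∈ B (s.restrict i h.le)}) :
    q ∈ PF κ (cobounded κ) ∧ q ⊆ p ∧ ∀ s ∈ q, deg q s = deg p s := by
  have hF_mono : ∀ A ∈ cobounded κ, ∀ C, A ⊆ C → C ⊆ Iio κ.ord → C ∈ cobounded κ :=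
    fun _ hA _ => cobounded_mono hA
  have hF_ne : ∀ A ∈ cobounded κ, ∀ a, ∃ b ∈ A, b ≠ a :=
    fun _ hA => cobounded_exists_ne huncount.le hA
  subst hq
  exact ⟨thin_mem_PF hF_mono hF_ne hp hB, thin_subset,
    fun s hs => deg_thin hF_ne hB hp.1.1 hp.2.1 hs⟩

/-- thinning out a condition `p ∈ P(F*_κ)` by shrinking each splitting
level to a co-bounded set `B_t ⊆ succSet p t` yields a condition `q ∈ P(F*_κ)` with
`q ≥ p` and the same splitting histories. -/
theorem stmt_10 (κ : Cardinal.{u}) (hreg : κ.IsRegular) (huncount : ℵ₀ < κ)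
    (hpow : κ ^< κ = κ)
    (p : Set (KNode κ)) (hp : p ∈ PF κ (cobounded κ))
    (B : KNode κ → Set Ordinal.{u})
    (hB : ∀ t ∈ p, IsSplitting (cobounded κ) p t →
      B t ∈ cobounded κ ∧ B t ⊆ succSet p t)
    (q : Set (KNode κ))
    (hq : q = {s | s ∈ p ∧ ∀ i (h : i < s.dom),
      IsSplitting (cobounded κ) p (s.restrict i h.le) → s.val i ∈ B (s.restrict i h.le)}) :
    q ∈ PF κ (cobounded κ) ∧ q ⊆ p ∧ ∀ s ∈ q, deg q s = deg p s :=
  stmt_10_general κ huncount p hp B hB q hq
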